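/- Let f : [0, ∞) → ℝ^{L_R*} be a solution of the discrete near-resonance acoustic kinetic system with broadening Λ ≥ 0. Then the total momentum ∑_{p∈L_R*} p·f_p(t) ∈ ℝ³ is constant in t. -/

import Mathlib

open scoped BigOperators Classical

/-- Euclidean norm of a point of the integer lattice `ℤ³`. -/
noncomputable def enorm3 (p : Fin 3 → ℤ) : ℝ := Real.sqrt (∑ i, ((p i : ℝ))^2)

/-- The truncated lattice `L_R* = {p ∈ ℤ³ : 0 < |p| < R}` (as a finite set). -/
noncomputable def latticeBall (R : ℝ) : Finset (Fin 3 → ℤ) :=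
  (Finset.Icc (fun _ => (-⌈R⌉ : ℤ)) (fun _ => (⌈R⌉ : ℤ))).filter
    (fun p => 0 < enorm3 p ∧ enorm3 p < R)

/-- Right-hand side of the discrete exact-resonance acoustic wave kinetic system, with
kernel `V_{p₁,p₂,p₃} = |p₁||p₂||p₃|` and phonon dispersion `ω(p) = |p|`. -/
noncomputable def Qres (R : ℝ) (f : (Fin 3 → ℤ) → ℝ) (p1 : Fin 3 → ℤ) : ℝ :=
  (∑ p2 ∈ latticeBall R, ∑ p3 ∈ latticeBall R,
      if p1 = p2 + p3 ∧ enorm3 p1 = enorm3 p2 + enorm3 p3 then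
        enorm3 p1 * enorm3 p2 * enorm3 p3 *
          (f p2 * f p3 - f p1 * (f p2 + f p3)) else 0)
  - 2 * ∑ p2 ∈ latticeBall R, ∑ p3 ∈ latticeBall R,
      if p3 = p1 + p2 ∧ enorm3 p3 = enorm3 p1 + enorm3 p2 then
        enorm3 p1 * enorm3 p2 * enorm3 p3 *
          (f p1 * f p2 - f p3 * (f p1 + f p2)) else 0

/-- Right-hand side of the discrete near-resonance acoustic wave kinetic system with
resonance broadening `Λ`. -/
noncomputable def QNR (R Λ : ℝ) (f : (Fin 3 → ℤ) → ℝ) (p1 : Fin 3 → ℤ) : ℝ :=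
  (∑ p2 ∈ latticeBall R, ∑ p3 ∈ latticeBall R,
      if p1 = p2 + p3 ∧ |enorm3 p1 - enorm3 p2 - enorm3 p3| ≤ Λ then
        enorm3 p1 * enorm3 p2 * enorm3 p3 *
          (f p2 * f p3 - f p1 * (f p2 + f p3)) else 0)
  - 2 * ∑ p2 ∈ latticeBall R, ∑ p3 ∈ latticeBall R,
      if p3 = p1 + p2 ∧ |enorm3 p3 - enorm3 p1 - enorm3 p2| ≤ Λ then
        enorm3 p1 * enorm3 p2 * enorm3 p3 *
          (f p1 * f p2 - f p3 * (f p1 + f p2)) else 0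

/-!
Write `Q = Q⁺ - 2 Q⁻` with `Q⁺_p = ∑_{b,c} K(p,b,c)` and `Q⁻_p = ∑_{b,c} K(c,p,b)`, where the
near-resonant kernel `K(a,b,c)` is symmetric in `b, c` and vanishes unless `a = b + c`.
Relabelling the triple sums gives the weak form `∑_p φ(p) Q_p = ∑_{a,b,c} (φ(a) - φ(b) - φ(c)) K(a,b,c)`
for every weight `φ`, and for an additive weight such as a coordinate `p ↦ p_i` every summand
vanishes. Hence the momentum has zero derivative on `[0, ∞)`.
-/

open Finset

section Collision

variable {α : Type*} (S : Finset α) (K : α → α → α → ℝ)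

def collision (p : α) : ℝ :=
  ∑ b ∈ S, ∑ c ∈ S, K p b c - 2 * ∑ b ∈ S, ∑ c ∈ S, K c p b

theorem sum_mul_collision (hK : ∀ a b c, K a b c = K a c b) (φ : α → ℝ) :
    ∑ p ∈ S, φ p * collision S K p =
      ∑ a ∈ S, ∑ b ∈ S, ∑ c ∈ S, (φ a - φ b - φ c) * K a b c := by
  have hgain : ∑ p ∈ S, φ p * ∑ b ∈ S, ∑ c ∈ S, K p b c =
      ∑ a ∈ S, ∑ b ∈ S, ∑ c ∈ S, φ a * K a b c := by
    simp only [mul_sum]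
  have hloss : ∑ p ∈ S, φ p * ∑ b ∈ S, ∑ c ∈ S, K c p b =
      ∑ a ∈ S, ∑ b ∈ S, ∑ c ∈ S, φ b * K a b c := by
    simp only [mul_sum]
    calc _ = ∑ b ∈ S, ∑ a ∈ S, ∑ c ∈ S, φ b * K a b c := sum_congr rfl fun _ _ => sum_comm
      _ = _ := sum_comm
  have hsymm : ∑ a ∈ S, ∑ b ∈ S, ∑ c ∈ S, φ b * K a b c =
      ∑ a ∈ S, ∑ b ∈ S, ∑ c ∈ S, φ c * K a b c := by
    refine sum_congr rfl fun a _ => ?_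
    rw [sum_comm]
    simp only [hK a]
  calc ∑ p ∈ S, φ p * collision S K p
      = ∑ p ∈ S, φ p * ∑ b ∈ S, ∑ c ∈ S, K p b c
          - 2 * ∑ p ∈ S, φ p * ∑ b ∈ S, ∑ c ∈ S, K c p b := by
        rw [mul_sum, ← sum_sub_distrib]
        exact sum_congr rfl fun p _ => by rw [collision]; ring
    _ = ∑ a ∈ S, ∑ b ∈ S, ∑ c ∈ S, φ a * K a b c
          - ∑ a ∈ S, ∑ b ∈ S, ∑ c ∈ S, φ b * K a b c
          - ∑ a ∈ S, ∑ b ∈ S, ∑ c ∈ S, φ c * K a b c := by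
        rw [hgain, hloss, ← hsymm]
        ring
    _ = _ := by simp only [sub_mul, sum_sub_distrib]

theorem sum_addMonoidHom_mul_collision [AddCommMonoid α] (hK : ∀ a b c, K a b c = K a c b)
    (hsupp : ∀ a b c, K a b c ≠ 0 → a = b + c) (φ : α →+ ℝ) :
    ∑ p ∈ S, φ p * collision S K p = 0 := by
  rw [sum_mul_collision S K hK]
  refine sum_eq_zero fun a _ => sum_eq_zero fun b _ => sum_eq_zero fun c _ => ?_
  by_cases h : K a b c = 0
  · rw [h, mul_zero]
  · rw [hsupp a b c h, map_add, sub_sub, sub_self, zero_mul]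

end Collision

noncomputable def nearResonantKernel (Λ : ℝ) (f : (Fin 3 → ℤ) → ℝ) (a b c : Fin 3 → ℤ) : ℝ :=
  if a = b + c ∧ |enorm3 a - enorm3 b - enorm3 c| ≤ Λ then
    enorm3 a * enorm3 b * enorm3 c * (f b * f c - f a * (f b + f c)) else 0

theorem nearResonantKernel_comm (Λ : ℝ) (f : (Fin 3 → ℤ) → ℝ) (a b c : Fin 3 → ℤ) :
    nearResonantKernel Λ f a b c = nearResonantKernel Λ f a c b := by
  unfold nearResonantKernel
  rw [add_comm b c, sub_right_comm (enorm3 a)]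
  congr 1
  ring

theorem eq_add_of_nearResonantKernel_ne_zero {Λ : ℝ} {f : (Fin 3 → ℤ) → ℝ} {a b c : Fin 3 → ℤ}
    (h : nearResonantKernel Λ f a b c ≠ 0) : a = b + c := by
  unfold nearResonantKernel at h
  split_ifs at h with hres
  · exact hres.1
  · exact absurd rfl h

theorem QNR_eq_collision (R Λ : ℝ) (f : (Fin 3 → ℤ) → ℝ) (p : Fin 3 → ℤ) :
    QNR R Λ f p = collision (latticeBall R) (nearResonantKernel Λ f) p := by
  unfold QNR collision nearResonantKernel
  congr 2
  refine sum_congr rfl fun b _ => sum_congr rfl fun c _ => ?_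
  congr 1
  ring

theorem sum_coord_mul_QNR (R Λ : ℝ) (f : (Fin 3 → ℤ) → ℝ) (i : Fin 3) :
    ∑ p ∈ latticeBall R, (p i : ℝ) * QNR R Λ f p = 0 := by
  simp only [QNR_eq_collision]
  exact sum_addMonoidHom_mul_collision _ _ (nearResonantKernel_comm Λ f)
    (fun _ _ _ => eq_add_of_nearResonantKernel_ne_zero)
    ((Int.castAddHom ℝ).comp (Pi.evalAddMonoidHom (fun _ : Fin 3 => ℤ) i))

theorem momentum_conservation_near_resonance_general (R Λ : ℝ)
    (f : ℝ → (Fin 3 → ℤ) → ℝ)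
    (hsol : ∀ p ∈ latticeBall R, ∀ t : ℝ, 0 ≤ t →
      HasDerivAt (fun s => f s p) (QNR R Λ (f t) p) t) :
    ∀ t : ℝ, 0 ≤ t → ∀ i : Fin 3,
      ∑ p ∈ latticeBall R, (p i : ℝ) * f t p = ∑ p ∈ latticeBall R, (p i : ℝ) * f 0 p := by
  intro t ht i
  have hderiv : ∀ s ∈ Set.Ici (0 : ℝ),
      HasDerivAt (fun u => ∑ p ∈ latticeBall R, (p i : ℝ) * f u p) 0 s := by
    intro s hs
    rw [← sum_coord_mul_QNR R Λ (f s) i]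
    exact HasDerivAt.fun_sum fun p hp => (hsol p hp s hs).const_mul _
  exact constant_of_has_deriv_right_zero
    (fun x hx => (hderiv x hx.1).continuousAt.continuousWithinAt)
    (fun x hx => (hderiv x hx.1).hasDerivWithinAt) t ⟨ht, le_rfl⟩

/-- Conservation of momentum for the discrete near-resonance acoustic kinetic system:
the vector `∑_{p ∈ L_R*} p·f_p(t) ∈ ℝ³` is constant along every solution. -/
theorem momentum_conservation_near_resonance (R Λ : ℝ) (hR : 0 < R) (hΛ : 0 ≤ Λ)
    (f : ℝ → (Fin 3 → ℤ) → ℝ)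
    (hsol : ∀ p ∈ latticeBall R, ∀ t : ℝ, 0 ≤ t →
      HasDerivAt (fun s => f s p) (QNR R Λ (f t) p) t) :
    ∀ t : ℝ, 0 ≤ t → ∀ i : Fin 3,
      ∑ p ∈ latticeBall R, (p i : ℝ) * f t p = ∑ p ∈ latticeBall R, (p i : ℝ) * f 0 p :=
  momentum_conservation_near_resonance_general R Λ f hsol
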